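/- Let R be a K-graded ring and q a prime ideal of R_0. Then the fiber of Spec_K(R) → Spec(R_0) over q contains a unique K-prime ideal p that contains every K-prime ideal in the fiber; moreover q is a maximal ideal of R_0 if and only if this p is a K-maximal ideal of R. -/

import Mathlib

/-!
For an ideal `J` of `R₀`, the homogeneous `x ∈ R_k` with `x R_{-k} ⊆ J` span a homogeneous
ideal `P(J) = maxHomogeneousOver 𝒜 J` with `P(J) ∩ R₀ = J`, and a homogeneous ideal `I` lies in
`P(J)` iff `I ∩ R₀ ⊆ J`. So `P(q)` is the largest homogeneous ideal over `q`; it is `K`-prime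
because for homogeneous `a, b` and `c ∈ R_{-deg a}`, `d ∈ R_{-deg b}` the degree-zero element
`(ab)(cd)` factors as `(ac)(bd)` in `R₀`. Since `J ↦ P(J)` is monotone and injective, and a
proper homogeneous `I ⊇ P(q)` contracts to a proper ideal containing `q`, maximality of `q`
corresponds to `K`-maximality of `P(q)`.
-/

section

variable {K R : Type*} [AddCommGroup K] [DecidableEq K] [CommRing R]
  (𝒜 : K → AddSubgroup R) [GradedRing 𝒜]

/-- A `K`-prime ideal: a proper (homogeneous) ideal such that a product of homogeneous
elements lies in it only if one of the factors does. -/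
def IsKPrime (p : Ideal R) : Prop :=
  Ideal.IsHomogeneous 𝒜 p ∧ p ≠ ⊤ ∧
    ∀ a b : R, SetLike.IsHomogeneousElem 𝒜 a → SetLike.IsHomogeneousElem 𝒜 b →
      a * b ∈ p → a ∈ p ∨ b ∈ p

/-- A `K`-maximal ideal: a homogeneous ideal maximal among proper homogeneous ideals. -/
def IsKMaximal (p : Ideal R) : Prop :=
  Ideal.IsHomogeneous 𝒜 p ∧ p ≠ ⊤ ∧
    ∀ a : Ideal R, Ideal.IsHomogeneous 𝒜 a → p ≤ a → a ≠ ⊤ → a = p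

/-- Contraction of an ideal of `R` to the degree zero subring `R₀`. -/
def contractToZero (a : Ideal R) : Ideal ↥(SetLike.GradeZero.subring 𝒜) :=
  Ideal.comap (SetLike.GradeZero.subring 𝒜).subtype a

open DirectSum

lemma mul_mem_grade_zero_of_mem_neg {x b : R} {k : K} (hx : x ∈ 𝒜 k) (hb : b ∈ 𝒜 (-k)) :
    x * b ∈ 𝒜 0 := by
  simpa using SetLike.GradedMul.mul_mem hx hb

def gradeZeroImage (J : Ideal (SetLike.GradeZero.subring 𝒜)) : AddSubgroup R :=
  J.toAddSubgroup.map (SetLike.GradeZero.subring 𝒜).subtype.toAddMonoidHom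

variable {𝒜} {J : Ideal (SetLike.GradeZero.subring 𝒜)}

lemma mem_gradeZeroImage_iff {a : R} (ha : a ∈ 𝒜 0) :
    a ∈ gradeZeroImage 𝒜 J ↔ (⟨a, ha⟩ : SetLike.GradeZero.subring 𝒜) ∈ J :=
  ⟨by rintro ⟨y, hy, rfl⟩; exact hy, fun h => ⟨_, h, rfl⟩⟩

lemma coe_mul_mem_gradeZeroImage {y : SetLike.GradeZero.subring 𝒜} (hy : y ∈ J) {b : R}
    (hb : b ∈ 𝒜 0) : (y : R) * b ∈ gradeZeroImage 𝒜 J :=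
  ⟨y * ⟨b, hb⟩, J.mul_mem_right _ hy, rfl⟩

lemma decompose_mul_mul_mem_gradeZeroImage (r : R) {x : R}
    (hx : ∀ k, ∀ b ∈ 𝒜 (-k), (decompose 𝒜 x k : R) * b ∈ gradeZeroImage 𝒜 J)
    (k : K) {b : R} (hb : b ∈ 𝒜 (-k)) :
    (decompose 𝒜 (r * x) k : R) * b ∈ gradeZeroImage 𝒜 J := by
  classical
  rw [decompose_mul, coe_mul_apply, Finset.sum_mul]
  refine AddSubgroup.sum_mem _ fun ⟨i, j⟩ hij => ?_
  have hijk : i + j = k := (Finset.mem_filter.mp hij).2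
  have hrb : (decompose 𝒜 r i : R) * b ∈ 𝒜 (-j) := by
    have := SetLike.GradedMul.mul_mem (decompose 𝒜 r i).2 hb
    rwa [← hijk, neg_add, add_neg_cancel_left] at this
  convert hx j _ hrb using 1
  ring

variable (𝒜 J)

def maxHomogeneousOver : Ideal R where
  carrier := {x | ∀ k, ∀ b ∈ 𝒜 (-k), (decompose 𝒜 x k : R) * b ∈ gradeZeroImage 𝒜 J}
  zero_mem' k b _ := by simp
  add_mem' hx hy k b hb := by
    rw [decompose_add, DirectSum.add_apply, AddMemClass.coe_add, add_mul]
    exact add_mem (hx k b hb) (hy k b hb)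
  smul_mem' r _ hx k _ hb := decompose_mul_mul_mem_gradeZeroImage r hx k hb

variable {𝒜 J}

lemma mem_maxHomogeneousOver_iff_of_mem {x : R} {i : K} (hx : x ∈ 𝒜 i) :
    x ∈ maxHomogeneousOver 𝒜 J ↔ ∀ b ∈ 𝒜 (-i), x * b ∈ gradeZeroImage 𝒜 J := by
  refine ⟨fun h b hb => decompose_of_mem_same 𝒜 hx ▸ h i b hb, fun h k b hb => ?_⟩
  rcases eq_or_ne k i with rfl | hki
  · rw [decompose_of_mem_same 𝒜 hx]
    exact h b hb
  · rw [decompose_of_mem_ne 𝒜 hx hki.symm, zero_mul]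
    exact zero_mem _

variable (𝒜 J)

lemma isHomogeneous_maxHomogeneousOver : (maxHomogeneousOver 𝒜 J).IsHomogeneous 𝒜 :=
  fun i x hx => (mem_maxHomogeneousOver_iff_of_mem (decompose 𝒜 x i).2).mpr (hx i)

lemma contractToZero_maxHomogeneousOver : contractToZero 𝒜 (maxHomogeneousOver 𝒜 J) = J := by
  ext y
  rw [contractToZero, Ideal.mem_comap, Subring.coe_subtype,
    mem_maxHomogeneousOver_iff_of_mem (i := 0) y.2, neg_zero]
  refine ⟨fun h => ?_, fun hy b hb => coe_mul_mem_gradeZeroImage hy hb⟩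
  simpa [mem_gradeZeroImage_iff y.2] using h 1 (SetLike.one_mem_graded 𝒜)

variable {𝒜 J}

lemma le_maxHomogeneousOver_iff {I : Ideal R} (hI : I.IsHomogeneous 𝒜) :
    I ≤ maxHomogeneousOver 𝒜 J ↔ contractToZero 𝒜 I ≤ J := by
  refine ⟨fun h => contractToZero_maxHomogeneousOver 𝒜 J ▸ Ideal.comap_mono h,
    fun h x hx k b hb => ?_⟩
  have hxb := mul_mem_grade_zero_of_mem_neg 𝒜 (decompose 𝒜 x k).2 hb
  exact (mem_gradeZeroImage_iff hxb).mpr (h (I.mul_mem_right b (hI k hx)))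

lemma maxHomogeneousOver_mono {J₁ J₂ : Ideal (SetLike.GradeZero.subring 𝒜)} (h : J₁ ≤ J₂) :
    maxHomogeneousOver 𝒜 J₁ ≤ maxHomogeneousOver 𝒜 J₂ :=
  (le_maxHomogeneousOver_iff (isHomogeneous_maxHomogeneousOver 𝒜 J₁)).mpr
    (by rwa [contractToZero_maxHomogeneousOver])

lemma maxHomogeneousOver_eq_top_iff : maxHomogeneousOver 𝒜 J = ⊤ ↔ J = ⊤ := by
  refine ⟨fun h => ?_, fun h => ?_⟩
  · rw [← contractToZero_maxHomogeneousOver 𝒜 J, h, contractToZero, Ideal.comap_top]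
  · exact top_le_iff.mp <|
      (le_maxHomogeneousOver_iff (Ideal.IsHomogeneous.top 𝒜)).mpr (h ▸ le_top)

lemma isKPrime_maxHomogeneousOver (hJ : J.IsPrime) : IsKPrime 𝒜 (maxHomogeneousOver 𝒜 J) := by
  refine ⟨isHomogeneous_maxHomogeneousOver 𝒜 J,
    (maxHomogeneousOver_eq_top_iff.not).mpr hJ.ne_top, ?_⟩
  rintro a b ⟨i, hai⟩ ⟨j, hbj⟩ hab
  simp only [mem_maxHomogeneousOver_iff_of_mem hai, mem_maxHomogeneousOver_iff_of_mem hbj]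
  by_contra! ⟨⟨c, hc, hac⟩, ⟨d, hd, hbd⟩⟩
  have hac₀ := mul_mem_grade_zero_of_mem_neg 𝒜 hai hc
  have hbd₀ := mul_mem_grade_zero_of_mem_neg 𝒜 hbj hd
  rw [mem_gradeZeroImage_iff hac₀] at hac
  rw [mem_gradeZeroImage_iff hbd₀] at hbd
  have hcd : c * d ∈ 𝒜 (-(i + j)) := neg_add i j ▸ SetLike.GradedMul.mul_mem hc hd
  have habcd := (mem_maxHomogeneousOver_iff_of_mem (SetLike.GradedMul.mul_mem hai hbj)).mp
    hab _ hcd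
  have hacbd₀ : a * c * (b * d) ∈ 𝒜 0 := by simpa using SetLike.GradedMul.mul_mem hac₀ hbd₀
  rw [mul_mul_mul_comm, mem_gradeZeroImage_iff hacbd₀] at habcd
  exact (hJ.mem_or_mem (x := ⟨_, hac₀⟩) (y := ⟨_, hbd₀⟩) habcd).elim hac hbd

lemma isKMaximal_maxHomogeneousOver_iff :
    IsKMaximal 𝒜 (maxHomogeneousOver 𝒜 J) ↔ J.IsMaximal := by
  have hJ := contractToZero_maxHomogeneousOver 𝒜 J
  refine ⟨fun ⟨_, hne, hmax⟩ => ⟨⟨?_, fun J' hJJ' => ?_⟩⟩, fun hJ' => ?_⟩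
  · exact (maxHomogeneousOver_eq_top_iff.not).mp hne
  · by_contra hJ'
    have := hmax _ (isHomogeneous_maxHomogeneousOver 𝒜 J') (maxHomogeneousOver_mono hJJ'.le)
      ((maxHomogeneousOver_eq_top_iff.not).mpr hJ')
    rw [← hJ, ← this, contractToZero_maxHomogeneousOver] at hJJ'
    exact hJJ'.ne rfl
  · refine ⟨isHomogeneous_maxHomogeneousOver 𝒜 J,
      (maxHomogeneousOver_eq_top_iff.not).mpr hJ'.ne_top,
      fun a ha hle hne => le_antisymm ((le_maxHomogeneousOver_iff ha).mpr ?_) hle⟩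
    have hJa : J ≤ contractToZero 𝒜 a := hJ ▸ Ideal.comap_mono hle
    exact (hJ'.eq_of_le (Ideal.comap_ne_top _ hne) hJa).ge

variable (𝒜)

/-- For a prime `q` of `R₀`, the fiber of `Spec_K(R) → Spec(R₀)` over `q` contains
a unique `K`-prime ideal `p` containing every `K`-prime in the fiber; moreover `q` is maximal
iff `p` is `K`-maximal. -/
theorem stmt_17 (q : Ideal ↥(SetLike.GradeZero.subring 𝒜)) (hq : q.IsPrime) :
    ∃ p : Ideal R,
      (IsKPrime 𝒜 p ∧ contractToZero 𝒜 p = q ∧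
        ∀ p' : Ideal R, IsKPrime 𝒜 p' → contractToZero 𝒜 p' = q → p' ≤ p) ∧
      (∀ p₂ : Ideal R,
        (IsKPrime 𝒜 p₂ ∧ contractToZero 𝒜 p₂ = q ∧
          ∀ p' : Ideal R, IsKPrime 𝒜 p' → contractToZero 𝒜 p' = q → p' ≤ p₂) → p₂ = p) ∧
      (q.IsMaximal ↔ IsKMaximal 𝒜 p) := by
  have hprime := isKPrime_maxHomogeneousOver (𝒜 := 𝒜) hq
  have hover := contractToZero_maxHomogeneousOver 𝒜 q
  have hle {p' : Ideal R} (hp' : IsKPrime 𝒜 p') (hc : contractToZero 𝒜 p' = q) :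
      p' ≤ maxHomogeneousOver 𝒜 q :=
    (le_maxHomogeneousOver_iff hp'.1).mpr hc.le
  refine ⟨maxHomogeneousOver 𝒜 q, ⟨hprime, hover, fun p' => hle⟩,
    fun p₂ ⟨hp₂, hc₂, hmax₂⟩ => le_antisymm (hle hp₂ hc₂) (hmax₂ _ hprime hover),
    isKMaximal_maxHomogeneousOver_iff.symm⟩

end
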